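/- arXiv:1506.04307 — 3 statements merged into one kernel-verified Lean document; each statement's English description precedes it below -/
import Mathlib

section
/- Let K, L be bounded convex sets in the plane with nonempty interior, where K has area 1. Let K_n be n points chosen independently and uniformly at random from K. Fix any ε > 0. Then with probability tending to 1 as n → ∞, there exists a hole contained in K homothetic to L with area at least (1−ε)·log n / n. -/
/-!
Fix a closed square `Q ⊆ K` (a closed ball for the sup metric of `ℝ × ℝ`) and tile it by
`m ≍ n / log n` disjoint homothets of `closure L`, each of area `a = c log n / n` with `c < 1`.
A given cell misses all `n` points with probability `(1 - a)ⁿ ≈ n^(-c)`, so the expected number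
of empty cells is `m (1 - a)ⁿ ≍ n^(1-c) / log n → ∞`. Disjointness makes the events "cell `i` is
empty" pairwise negatively correlated, and the second moment method turns the diverging
expectation into "some cell is empty" with probability `≥ 1 - 1 / (m (1 - a)ⁿ) → 1`; the homothet
of `L` inside an empty cell is the required hole.
-/

open MeasureTheory Filter Set Bornology

noncomputable section

/-- Rotation of the plane by angle `θ`. -/
def rot (θ : ℝ) (p : ℝ × ℝ) : ℝ × ℝ :=
  (p.1 * Real.cos θ - p.2 * Real.sin θ, p.1 * Real.sin θ + p.2 * Real.cos θ)

/-- A rectangle: the image of an axis-parallel closed rectangle `[0,a] × [0,b]`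
(with `a, b > 0`) under a rigid motion (rotation followed by translation). -/
def IsRectangle (R : Set (ℝ × ℝ)) : Prop :=
  ∃ (θ : ℝ) (c : ℝ × ℝ) (a b : ℝ), 0 < a ∧ 0 < b ∧
    R = (fun p => c + rot θ p) '' (Icc 0 a ×ˢ Icc 0 b)

/-- `S` is a homothetic copy of `L`: `S = x + r • L` for some `x` and ratio `r > 0`. -/
def IsHomothet (L S : Set (ℝ × ℝ)) : Prop :=
  ∃ (x : ℝ × ℝ) (r : ℝ), 0 < r ∧ S = (fun y => x + r • y) '' L

/-- The joint distribution of `n` points chosen independently, each uniformly at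
random from `K` (where `K` has area 1, so the uniform distribution on `K` is the
restriction of Lebesgue measure to `K`). -/
def unifPts (K : Set (ℝ × ℝ)) (n : ℕ) : Measure (Fin n → ℝ × ℝ) :=
  Measure.pi fun _ => volume.restrict K

open Function Metric Real
open scoped ENNReal Pointwise Topology

section SecondMoment

variable {Ω : Type*} [MeasurableSpace Ω] (μ : Measure Ω)

theorem sq_lintegral_le_lintegral_sq_mul_measure {f : Ω → ℝ≥0∞} (hf : AEMeasurable f μ)
    {s : Set Ω} (hs : MeasurableSet s) (hfs : ∀ x ∉ s, f x = 0) :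
    (∫⁻ x, f x ∂μ) ^ 2 ≤ (∫⁻ x, f x ^ 2 ∂μ) * μ s := by
  have hfs' : f = f * s.indicator 1 := by
    ext x
    by_cases hx : x ∈ s <;> simp [hx, hfs]
  have hCS := ENNReal.lintegral_mul_le_Lp_mul_Lq μ Real.HolderConjugate.two_two hf
    (g := s.indicator 1) ((aemeasurable_one (μ := μ)).indicator hs)
  rw [← hfs'] at hCS
  have hind : ∀ x, s.indicator (1 : Ω → ℝ≥0∞) x ^ (2 : ℝ) = s.indicator 1 x := fun x => by
    by_cases hx : x ∈ s <;> simp [hx]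
  simp only [hind, lintegral_indicator_one hs, ENNReal.rpow_two] at hCS
  calc (∫⁻ x, f x ∂μ) ^ 2
      ≤ ((∫⁻ x, f x ^ 2 ∂μ) ^ (1 / 2 : ℝ) * μ s ^ (1 / 2 : ℝ)) ^ (2 : ℝ) := by
        rw [← ENNReal.rpow_two]; gcongr
    _ = (∫⁻ x, f x ^ 2 ∂μ) * μ s := by
        rw [ENNReal.mul_rpow_of_nonneg _ _ zero_le_two, ← ENNReal.rpow_mul, ← ENNReal.rpow_mul]
        norm_num

theorem ENNReal.one_sub_inv_le_of_sq_le_mul {s u : ℝ≥0∞} (hs : s ≠ ∞) (hu : u ≤ 1)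
    (h : s ^ 2 ≤ (s + s ^ 2) * u) : 1 - s⁻¹ ≤ u := by
  rcases eq_or_ne s 0 with hs0 | hs0
  · simp [hs0]
  have hsu : s ≤ 1 + s * u := by
    rw [← ENNReal.mul_le_mul_iff_right hs0 hs]
    calc s * s = s ^ 2 := (sq s).symm
      _ ≤ (s + s ^ 2) * u := h
      _ = s * (u + s * u) := by ring
      _ ≤ s * (1 + s * u) := by gcongr
  rw [tsub_le_iff_right]
  calc 1 = s⁻¹ * s := (ENNReal.inv_mul_cancel hs0 hs).symm
    _ ≤ s⁻¹ * (s * u + 1) := by rw [add_comm (s * u)]; gcongr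
    _ = u + s⁻¹ := by
        rw [mul_add, ← mul_assoc, ENNReal.inv_mul_cancel hs0 hs, one_mul, mul_one]

theorem lintegral_sq_sum_indicator_le {ι : Type*} [Fintype ι] {E : ι → Set Ω}
    (hE : ∀ i, MeasurableSet (E i)) {p : ℝ≥0∞} (hp : ∀ i, μ (E i) = p)
    (hpair : Pairwise fun i j => μ (E i ∩ E j) ≤ p ^ 2) :
    ∫⁻ ω, (∑ i, (E i).indicator 1 ω) ^ 2 ∂μ ≤
      Fintype.card ι * p + (Fintype.card ι * p) ^ 2 := by
  classical
  have hle : ∀ i j, μ (E i ∩ E j) ≤ (if i = j then p else 0) + p ^ 2 := fun i j => by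
    by_cases hij : i = j
    · simp [hij, hp]
    · simpa [hij] using hpair hij
  have hmeas : ∀ i j, Measurable ((E i ∩ E j).indicator (1 : Ω → ℝ≥0∞)) := fun i j =>
    measurable_one.indicator ((hE i).inter (hE j))
  calc ∫⁻ ω, (∑ i, (E i).indicator 1 ω) ^ 2 ∂μ
      = ∫⁻ ω, ∑ i, ∑ j, (E i ∩ E j).indicator 1 ω ∂μ := by
        simp only [sq, Finset.sum_mul_sum, inter_indicator_one, Pi.mul_apply]
    _ = ∑ i, ∑ j, μ (E i ∩ E j) := by
        rw [lintegral_finsetSum _ fun i _ => Finset.measurable_sum _ fun j _ => hmeas i j]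
        refine Finset.sum_congr rfl fun i _ => ?_
        rw [lintegral_finsetSum _ fun j _ => hmeas i j]
        simp [lintegral_indicator_one ((hE _).inter (hE _))]
    _ ≤ ∑ i, ∑ j, ((if i = j then p else 0) + p ^ 2) := by gcongr with i _ j _; exact hle i j
    _ = Fintype.card ι * p + (Fintype.card ι * p) ^ 2 := by
        simp [Finset.sum_add_distrib, Finset.sum_ite_eq, pow_two]
        ring

theorem one_sub_inv_card_mul_le_measure_iUnion [IsProbabilityMeasure μ] {ι : Type*}
    [Fintype ι] {E : ι → Set Ω} (hE : ∀ i, MeasurableSet (E i)) {p : ℝ≥0∞}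
    (hp : ∀ i, μ (E i) = p) (hpair : Pairwise fun i j => μ (E i ∩ E j) ≤ p ^ 2) :
    1 - (Fintype.card ι * p)⁻¹ ≤ μ (⋃ i, E i) := by
  set X : Ω → ℝ≥0∞ := fun ω => ∑ i, (E i).indicator 1 ω
  have hX : ∫⁻ ω, X ω ∂μ = Fintype.card ι * p := by
    rw [lintegral_finsetSum _ fun i _ => measurable_one.indicator (hE i)]
    simp [lintegral_indicator_one (hE _), hp]
  have hXU : ∀ ω ∉ ⋃ i, E i, X ω = 0 := fun ω hω =>
    Finset.sum_eq_zero fun i _ => indicator_of_notMem (fun h => hω (mem_iUnion_of_mem i h)) _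
  have hs_top : (Fintype.card ι : ℝ≥0∞) * p ≠ ∞ := by
    rcases isEmpty_or_nonempty ι with hι | hι
    · simp
    · exact ENNReal.mul_ne_top (ENNReal.natCast_ne_top _)
        (hp (Classical.arbitrary ι) ▸ measure_ne_top μ _)
  refine ENNReal.one_sub_inv_le_of_sq_le_mul hs_top prob_le_one ?_
  calc (Fintype.card ι * p) ^ 2 = (∫⁻ ω, X ω ∂μ) ^ 2 := by rw [hX]
    _ ≤ (∫⁻ ω, X ω ^ 2 ∂μ) * μ (⋃ i, E i) :=
      sq_lintegral_le_lintegral_sq_mul_measure μ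
        (Finset.measurable_sum _ fun i _ => measurable_one.indicator (hE i)).aemeasurable
        (MeasurableSet.iUnion hE) hXU
    _ ≤ _ := by gcongr; exact lintegral_sq_sum_indicator_le μ hE hp hpair

end SecondMoment

section Sampling

variable {X : Type*} [MeasurableSpace X] (ν : Measure X)

theorem measure_pi_forall_notMem [SigmaFinite ν] (n : ℕ) (B : Set X) :
    Measure.pi (fun _ : Fin n => ν) {ω | ∀ k, ω k ∉ B} = ν Bᶜ ^ n := by
  have : {ω : Fin n → X | ∀ k, ω k ∉ B} = univ.pi fun _ => Bᶜ := by ext; simp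
  simp [this, Measure.pi_pi]

theorem one_sub_inv_le_measure_pi_exists_forall_notMem [IsProbabilityMeasure ν] (n : ℕ)
    {ι : Type*} [Fintype ι] {A : ι → Set X} (hA : ∀ i, MeasurableSet (A i))
    (hdisj : Pairwise (Disjoint on A)) {α : ℝ} (hα : 0 ≤ α)
    (hνA : ∀ i, ν (A i) = ENNReal.ofReal α) :
    1 - (ENNReal.ofReal (Fintype.card ι * (1 - α) ^ n))⁻¹ ≤
      Measure.pi (fun _ : Fin n => ν) {ω | ∃ i, ∀ k, ω k ∉ A i} := by
  set E : ι → Set (Fin n → X) := fun i => {ω | ∀ k, ω k ∉ A i}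
  have hα1 : ∀ i, α ≤ 1 := fun i => by
    simpa [hνA i, ENNReal.ofReal_le_one] using prob_le_one (μ := ν) (s := A i)
  have hE : ∀ i, MeasurableSet (E i) := fun i => by
    have : E i = univ.pi fun _ => (A i)ᶜ := by ext; simp [E]
    exact this ▸ MeasurableSet.univ_pi fun _ => (hA i).compl
  have hEp : ∀ i, Measure.pi (fun _ : Fin n => ν) (E i) = ENNReal.ofReal ((1 - α) ^ n) := by
    intro i
    rw [measure_pi_forall_notMem, prob_compl_eq_one_sub (hA i), hνA i, ← ENNReal.ofReal_one,
      ← ENNReal.ofReal_sub _ hα, ENNReal.ofReal_pow (by linarith [hα1 i])]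
  have hEpair : Pairwise fun i j => Measure.pi (fun _ : Fin n => ν) (E i ∩ E j) ≤
      ENNReal.ofReal ((1 - α) ^ n) ^ 2 := by
    intro i j hij
    have hEij : E i ∩ E j = {ω | ∀ k, ω k ∉ A i ∪ A j} := by
      ext; simp [E, forall_and]
    have hcompl : ν (A i ∪ A j)ᶜ = ENNReal.ofReal (1 - 2 * α) := by
      rw [prob_compl_eq_one_sub ((hA i).union (hA j)), measure_union (hdisj hij) (hA j), hνA,
        hνA, ← ENNReal.ofReal_add hα hα, ← ENNReal.ofReal_one,
        ← ENNReal.ofReal_sub _ (by linarith)]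
      ring_nf
    rw [hEij, measure_pi_forall_notMem, hcompl]
    calc ENNReal.ofReal (1 - 2 * α) ^ n ≤ ENNReal.ofReal ((1 - α) ^ 2) ^ n := by
          gcongr; nlinarith
      _ = ENNReal.ofReal ((1 - α) ^ n) ^ 2 := by
          rw [← ENNReal.ofReal_pow (sq_nonneg _),
            ← ENNReal.ofReal_pow (pow_nonneg (by linarith [hα1 i]) _), ← pow_mul, ← pow_mul,
            mul_comm]
  have hcard : (Fintype.card ι : ℝ≥0∞) * ENNReal.ofReal ((1 - α) ^ n) =
      ENNReal.ofReal (Fintype.card ι * (1 - α) ^ n) := by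
    rw [ENNReal.ofReal_mul (Nat.cast_nonneg _), ENNReal.ofReal_natCast]
  have := one_sub_inv_card_mul_le_measure_iUnion _ hE hEp hEpair
  rw [hcard] at this
  simpa [E, ofPred_exists] using this

end Sampling

section AddHaar

variable {E : Type*} [NormedAddCommGroup E] [NormedSpace ℝ E] [MeasurableSpace E] [BorelSpace E]
  [FiniteDimensional ℝ E] (μ : Measure E) [μ.IsAddHaarMeasure]

theorem Convex.addHaar_closure {s : Set E} (hs : Convex ℝ s) : μ (closure s) = μ s := by
  refine le_antisymm ?_ (measure_mono subset_closure)
  calc μ (closure s) ≤ μ s + μ (frontier s) := by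
        rw [closure_eq_self_union_frontier]; exact measure_union_le _ _
    _ = μ s := by rw [hs.addHaar_frontier μ, add_zero]

theorem MeasureTheory.Measure.addHaar_image_add_smul (x : E) (r : ℝ) (s : Set E) :
    μ ((fun y => x + r • y) '' s) = ENNReal.ofReal |r ^ Module.finrank ℝ E| * μ s := by
  have : (fun y => x + r • y) '' s = x +ᵥ r • s := by
    rw [← image_smul, ← image_vadd, image_image]; rfl
  rw [this, measure_vadd, Measure.addHaar_smul]

end AddHaar

theorem volume_image_add_smul (x : ℝ × ℝ) (r : ℝ) (s : Set (ℝ × ℝ)) :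
    volume ((fun y => x + r • y) '' s) = ENNReal.ofReal (r ^ 2) * volume s := by
  rw [Measure.addHaar_image_add_smul, Module.finrank_prod, Module.finrank_self, one_add_one_eq_two,
    abs_of_nonneg (sq_nonneg r)]

theorem image_add_smul_closure_subset_ball {L : Set (ℝ × ℝ)} {R : ℝ}
    (hL : L ⊆ closedBall 0 R) (x : ℝ × ℝ) {r ρ : ℝ} (hr : 0 ≤ r) (hrR : r * R < ρ) :
    (fun y => x + r • y) '' closure L ⊆ ball x ρ := by
  rintro _ ⟨y, hy, rfl⟩
  have hyR : ‖y‖ ≤ R := by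
    simpa using closure_minimal hL isClosed_closedBall hy
  rw [mem_ball, dist_eq_norm, add_sub_cancel_left, norm_smul, Real.norm_of_nonneg hr]
  exact (mul_le_mul_of_nonneg_left hyR hr).trans_lt hrR

def gridCenter (t ρ : ℝ) (g : ℕ) (i : Fin g) : ℝ := t + (2 * i + 1 - g) * ρ

theorem pairwise_disjoint_ball_gridCenter (t : ℝ) {ρ : ℝ} (hρ : 0 ≤ ρ) (g : ℕ) :
    Pairwise (Disjoint on fun i => ball (gridCenter t ρ g i) ρ) := by
  intro i j hij
  apply ball_disjoint_ball
  have hij' : (1 : ℝ) ≤ |(i : ℝ) - j| := by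
    rcases lt_or_gt_of_ne hij with h | h
    · have : (i : ℝ) + 1 ≤ j := by exact_mod_cast h
      rw [abs_sub_comm]; exact le_abs.mpr (Or.inl (by linarith))
    · have : (j : ℝ) + 1 ≤ i := by exact_mod_cast h
      exact le_abs.mpr (Or.inl (by linarith))
  rw [Real.dist_eq, gridCenter, gridCenter,
    show t + (2 * i + 1 - g) * ρ - (t + (2 * j + 1 - g) * ρ) = 2 * ρ * (i - j) by ring,
    abs_mul, abs_of_nonneg (by positivity)]
  nlinarith

theorem ball_gridCenter_subset (t : ℝ) {ρ : ℝ} (hρ : 0 ≤ ρ) {g : ℕ} (i : Fin g) :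
    ball (gridCenter t ρ g i) ρ ⊆ closedBall t (g * ρ) := by
  have hi : (i : ℝ) + 1 ≤ g := by exact_mod_cast i.isLt
  rw [Real.ball_eq_Ioo, Real.closedBall_eq_Icc, gridCenter]
  refine Ioo_subset_Icc_self.trans (Icc_subset_Icc ?_ ?_) <;> nlinarith

theorem exists_pairwise_disjoint_ball_subset_closedBall (x : ℝ × ℝ) {ρ : ℝ} (hρ : 0 ≤ ρ)
    (g : ℕ) : ∃ c : Fin g × Fin g → ℝ × ℝ, Pairwise (Disjoint on fun i => ball (c i) ρ) ∧
      ∀ i, ball (c i) ρ ⊆ closedBall x (g * ρ) := by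
  refine ⟨fun i => (gridCenter x.1 ρ g i.1, gridCenter x.2 ρ g i.2), ?_, fun i => ?_⟩
  · rintro ⟨i₁, i₂⟩ ⟨j₁, j₂⟩ hij
    simp only [onFun, ← ball_prod_same, Set.disjoint_prod]
    by_cases h : i₁ = j₁
    · exact Or.inr (pairwise_disjoint_ball_gridCenter x.2 hρ g fun h₂ => hij (Prod.ext h h₂))
    · exact Or.inl (pairwise_disjoint_ball_gridCenter x.1 hρ g h)
  · rw [← ball_prod_same, ← closedBall_prod_same]
    exact prod_mono (ball_gridCenter_subset _ hρ _) (ball_gridCenter_subset _ hρ _)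

theorem exp_neg_add_two_mul_sq_le_one_sub {a : ℝ} (ha : a ≤ 1 / 2) :
    exp (-(a + 2 * a ^ 2)) ≤ 1 - a := by
  rw [exp_neg, inv_le_iff_one_le_mul₀ (exp_pos _)]
  nlinarith [add_one_le_exp (a + 2 * a ^ 2), exp_pos (a + 2 * a ^ 2)]

theorem tendsto_mul_log_div_atTop (c : ℝ) :
    Tendsto (fun n : ℕ => c * log n / n) atTop (𝓝 0) := by
  simpa [mul_div_assoc, comp_def] using ((tendsto_pow_log_div_mul_add_atTop 1 0 1 one_ne_zero).comp
    (tendsto_natCast_atTop_atTop (R := ℝ))).const_mul c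

theorem ENNReal.tendsto_one_sub_inv_ofReal {α : Type*} {l : Filter α} {f : α → ℝ}
    (hf : Tendsto f l atTop) : Tendsto (fun x => 1 - (ENNReal.ofReal (f x))⁻¹) l (𝓝 1) := by
  have : Tendsto (fun x => (ENNReal.ofReal (f x))⁻¹) l (𝓝 0) := by
    simpa using tendsto_inv_iff.2 (ENNReal.tendsto_ofReal_atTop.comp hf)
  simpa using ENNReal.Tendsto.sub tendsto_const_nhds this (Or.inr ENNReal.zero_ne_top)

theorem tendsto_div_log_mul_one_sub_pow_atTop {c : ℝ} (hc1 : c < 1) :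
    Tendsto (fun n : ℕ => n / log n * (1 - c * log n / n) ^ n) atTop atTop := by
  have hlog : Tendsto (fun n : ℕ => log n) atTop atTop :=
    tendsto_log_atTop.comp tendsto_natCast_atTop_atTop
  have hsq : Tendsto (fun n : ℕ => log n ^ 2 / n) atTop (𝓝 0) := by
    simpa [comp_def] using (tendsto_pow_log_div_mul_add_atTop 1 0 2 one_ne_zero).comp
      (tendsto_natCast_atTop_atTop (R := ℝ))
  have hmain : Tendsto (fun n : ℕ => exp ((1 - c) * log n) / log n ^ (1 : ℝ)) atTop atTop :=
    (tendsto_exp_mul_div_rpow_atTop 1 (1 - c) (by linarith)).comp hlog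
  have hcorr : Tendsto (fun n : ℕ => exp (-(2 * c ^ 2 * (log n ^ 2 / n)))) atTop (𝓝 1) := by
    simpa [comp_def] using (continuous_exp.tendsto _).comp (hsq.const_mul (2 * c ^ 2)).neg
  refine tendsto_atTop_mono' _ ?_ (hmain.atTop_mul_pos one_pos hcorr)
  filter_upwards [(tendsto_mul_log_div_atTop c).eventually_le_const
    (by norm_num : (0 : ℝ) < 1 / 2), eventually_gt_atTop 1] with n hsmall_n hn
  have hn0 : (0 : ℝ) < n := by exact_mod_cast (zero_lt_one.trans hn)
  have hlogn : 0 < log n := log_pos (by exact_mod_cast hn)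
  calc exp ((1 - c) * log n) / log n ^ (1 : ℝ) * exp (-(2 * c ^ 2 * (log n ^ 2 / n)))
      = n / log n * exp (-(c * log n / n + 2 * (c * log n / n) ^ 2)) ^ n := by
        rw [← exp_nat_mul, rpow_one, sub_mul, one_mul, exp_sub, exp_log hn0]
        field_simp
        rw [← exp_add]
        congr 1
        field_simp
        ring
    _ ≤ n / log n * (1 - c * log n / n) ^ n := by
        gcongr
        exact exp_neg_add_two_mul_sq_le_one_sub hsmall_n

def holeEvent (K L : Set (ℝ × ℝ)) (n : ℕ) (v : ℝ) : Set (Fin n → ℝ × ℝ) :=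
  {ω | ∃ S : Set (ℝ × ℝ), IsHomothet L S ∧ S ⊆ K ∧ (∀ i, ω i ∉ interior S) ∧
    ENNReal.ofReal v ≤ volume S}

theorem holeEvent_anti (K L : Set (ℝ × ℝ)) (n : ℕ) : Antitone (holeEvent K L n) :=
  fun _ _ hvw _ ⟨S, hS, hSK, hω, hvol⟩ =>
    ⟨S, hS, hSK, hω, (ENNReal.ofReal_le_ofReal hvw).trans hvol⟩

theorem isProbabilityMeasure_unifPts {K : Set (ℝ × ℝ)} (hK : volume K = 1) (n : ℕ) :
    IsProbabilityMeasure (unifPts K n) :=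
  have : IsProbabilityMeasure (volume.restrict K) := ⟨by simpa using hK⟩
  inferInstanceAs (IsProbabilityMeasure (Measure.pi _))

theorem one_sub_inv_le_unifPts_holeEvent_of_grid {K L : Set (ℝ × ℝ)} (hKvol : volume K = 1)
    (hLconv : Convex ℝ L) {x : ℝ × ℝ} {δ R v : ℝ} (hK : closedBall x δ ⊆ K)
    (hL : L ⊆ closedBall 0 R) (hR : 0 ≤ R) (hv : volume L = ENNReal.ofReal v) (hv0 : 0 ≤ v)
    {r ρ : ℝ} (hr : 0 < r) (hrR : r * R < ρ) {g : ℕ} (hgρ : g * ρ ≤ δ) (n : ℕ) :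
    1 - (ENNReal.ofReal (g ^ 2 * (1 - r ^ 2 * v) ^ n))⁻¹ ≤
      unifPts K n (holeEvent K L n (r ^ 2 * v)) := by
  have : IsProbabilityMeasure (volume.restrict K) := ⟨by simpa using hKvol⟩
  have hρ : 0 ≤ ρ := (mul_nonneg hr.le hR).trans hrR.le
  obtain ⟨c, hdisj, hball⟩ := exists_pairwise_disjoint_ball_subset_closedBall x hρ g
  set A : Fin g × Fin g → Set (ℝ × ℝ) := fun i => (fun y => c i + r • y) '' closure L
  have hA_ball : ∀ i, A i ⊆ ball (c i) ρ := fun i =>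
    image_add_smul_closure_subset_ball hL (c i) hr.le hrR
  have hA_K : ∀ i, A i ⊆ K := fun i =>
    (hA_ball i).trans <| (hball i).trans <| (closedBall_subset_closedBall hgρ).trans hK
  have hA_meas : ∀ i, MeasurableSet (A i) := fun i =>
    (((isBounded_closedBall.subset hL).isCompact_closure).image
      (continuous_const.add (continuous_const_smul r))).isClosed.measurableSet
  have hA_vol : ∀ i, volume.restrict K (A i) = ENNReal.ofReal (r ^ 2 * v) := fun i => by
    rw [Measure.restrict_eq_self _ (hA_K i), volume_image_add_smul,
      hLconv.addHaar_closure volume, hv, ← ENNReal.ofReal_mul (sq_nonneg r)]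
  have := one_sub_inv_le_measure_pi_exists_forall_notMem (volume.restrict K) n hA_meas
    (fun i j hij => (hdisj hij).mono (hA_ball i) (hA_ball j)) (by positivity) hA_vol
  rw [Fintype.card_prod, Fintype.card_fin, Nat.cast_mul, ← sq] at this
  refine this.trans (measure_mono ?_)
  rintro ω ⟨i, hi⟩
  refine ⟨(fun y => c i + r • y) '' L, ⟨c i, r, hr, rfl⟩,
    (image_mono subset_closure).trans (hA_K i), fun k hk => hi k ?_, ?_⟩
  · exact image_mono subset_closure (interior_subset hk)
  · rw [volume_image_add_smul, hv, ← ENNReal.ofReal_mul (sq_nonneg r)]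

theorem one_sub_inv_le_unifPts_holeEvent {K L : Set (ℝ × ℝ)} (hKvol : volume K = 1)
    (hLconv : Convex ℝ L) {x : ℝ × ℝ} {δ R v : ℝ} (hK : closedBall x δ ⊆ K) (hδ : 0 ≤ δ)
    (hL : L ⊆ closedBall 0 R) (hR : 0 < R) (hv : volume L = ENNReal.ofReal v) (hv0 : 0 < v)
    {a : ℝ} (ha0 : 0 < a) (ha1 : a ≤ 1) (ha : 4 * R ^ 2 * a ≤ δ ^ 2 * v) (n : ℕ) :
    1 - (ENNReal.ofReal (δ ^ 2 * v / (16 * R ^ 2 * a) * (1 - a) ^ n))⁻¹ ≤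
      unifPts K n (holeEvent K L n a) := by
  set r := √(a / v)
  have hr : 0 < r := sqrt_pos.2 (div_pos ha0 hv0)
  have hr2 : r ^ 2 = a / v := sq_sqrt (div_pos ha0 hv0).le
  have hrR : 0 < 2 * r * R := by positivity
  set x := δ / (2 * r * R)
  have hx : 1 ≤ x := by
    rw [le_div_iff₀ hrR, one_mul, ← pow_le_pow_iff_left₀ hrR.le hδ two_ne_zero, mul_pow,
      mul_pow, hr2, show 2 ^ 2 * (a / v) * R ^ 2 = 4 * R ^ 2 * a / v by ring, div_le_iff₀ hv0]
    exact ha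
  have hfloor : x / 2 ≤ ⌊x⌋₊ := by
    have := Nat.lt_floor_add_one x
    have : (1 : ℝ) ≤ ⌊x⌋₊ := by exact_mod_cast Nat.le_floor (by exact_mod_cast hx)
    linarith
  have key := one_sub_inv_le_unifPts_holeEvent_of_grid hKvol hLconv hK hL hR.le hv hv0.le hr
    (by nlinarith) (g := ⌊x⌋₊) ((mul_le_mul_of_nonneg_right (Nat.floor_le (by positivity))
      hrR.le).trans_eq (div_mul_cancel₀ _ hrR.ne')) n
  rw [hr2, div_mul_cancel₀ _ hv0.ne'] at key
  refine le_trans ?_ key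
  gcongr
  calc δ ^ 2 * v / (16 * R ^ 2 * a) = (x / 2) ^ 2 := by
        rw [div_pow, div_pow, mul_pow, mul_pow, hr2]; field_simp; ring
    _ ≤ (⌊x⌋₊ : ℝ) ^ 2 := by gcongr

theorem tendsto_unifPts_holeEvent {K L : Set (ℝ × ℝ)} (hKint : (interior K).Nonempty)
    (hKvol : volume K = 1) (hLconv : Convex ℝ L) (hLbd : IsBounded L)
    (hLint : (interior L).Nonempty) {c : ℝ} (hc0 : 0 < c) (hc1 : c < 1) :
    Tendsto (fun n : ℕ => unifPts K n (holeEvent K L n (c * log n / n))) atTop (𝓝 1) := by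
  have := isProbabilityMeasure_unifPts hKvol
  obtain ⟨x, hx⟩ := hKint
  obtain ⟨δ, hδ, hK⟩ := nhds_basis_closedBall.mem_iff.1 (mem_interior_iff_mem_nhds.1 hx)
  obtain ⟨R, hR, hL⟩ := hLbd.subset_closedBall_lt 0 0
  have hL_top : volume L ≠ ∞ := (measure_mono hL).trans_lt measure_closedBall_lt_top |>.ne
  set v := (volume L).toReal
  have hv0 : 0 < v := ENNReal.toReal_pos
    (Measure.measure_pos_of_nonempty_interior volume hLint).ne' hL_top
  set κ := δ ^ 2 * v / (16 * R ^ 2)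
  have hlower : ∀ᶠ n : ℕ in atTop,
      1 - (ENNReal.ofReal (κ / c * (n / log n * (1 - c * log n / n) ^ n)))⁻¹ ≤
        unifPts K n (holeEvent K L n (c * log n / n)) := by
    filter_upwards [(tendsto_mul_log_div_atTop c).eventually_le_const
      (lt_min one_pos (by positivity : 0 < δ ^ 2 * v / (4 * R ^ 2))), eventually_gt_atTop 1]
      with n hsmall hn
    have hn0 : (0 : ℝ) < n := by exact_mod_cast zero_lt_one.trans hn
    have hlog : 0 < log n := log_pos (by exact_mod_cast hn)
    convert one_sub_inv_le_unifPts_holeEvent hKvol hLconv hK hδ.le hL hR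
      (ENNReal.ofReal_toReal hL_top).symm hv0 (by positivity) (hsmall.trans (min_le_left _ _))
      ((le_div_iff₀' (by positivity)).1 (hsmall.trans (min_le_right _ _))) n using 4
    simp only [κ, v]
    field_simp
  refine tendsto_of_tendsto_of_tendsto_of_le_of_le' (ENNReal.tendsto_one_sub_inv_ofReal
    ((tendsto_div_log_mul_one_sub_pow_atTop hc1).const_mul_atTop (by positivity)))
    tendsto_const_nhds hlower (Eventually.of_forall fun n => prob_le_one)

theorem exists_large_homothetic_hole_general (K L : Set (ℝ × ℝ))
    (hKint : (interior K).Nonempty)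
    (hKvol : volume K = 1)
    (hLconv : Convex ℝ L) (hLbd : IsBounded L) (hLint : (interior L).Nonempty)
    (ε : ℝ) (hε : 0 < ε) :
    Tendsto (fun n : ℕ =>
      unifPts K n {ω : Fin n → ℝ × ℝ |
        ∃ S : Set (ℝ × ℝ), IsHomothet L S ∧ S ⊆ K ∧ (∀ i, ω i ∉ interior S) ∧
          ENNReal.ofReal ((1 - ε) * Real.log n / n) ≤ volume S})
      atTop (nhds 1) := by
  have : ∀ n, IsProbabilityMeasure (unifPts K n) := isProbabilityMeasure_unifPts hKvol
  have hc1 : max (1 - ε) (1 / 2) < 1 := max_lt (by linarith) (by norm_num)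
  refine tendsto_of_tendsto_of_tendsto_of_le_of_le
    (tendsto_unifPts_holeEvent hKint hKvol hLconv hLbd hLint
      (lt_max_of_lt_right one_half_pos) hc1)
    tendsto_const_nhds (fun n => measure_mono (holeEvent_anti K L n ?_)) fun n => prob_le_one
  exact div_le_div_of_nonneg_right
    (mul_le_mul_of_nonneg_right (le_max_left _ _) (log_natCast_nonneg n)) (Nat.cast_nonneg n)

/-- Statement (1) in the proof of Theorem 1: for any fixed `ε > 0`, w.h.p. there
exists a hole contained in `K` homothetic to `L` with area at least `(1-ε) log n / n`. -/
theorem exists_large_homothetic_hole (K L : Set (ℝ × ℝ))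
    (hKconv : Convex ℝ K) (hKbd : IsBounded K) (hKint : (interior K).Nonempty)
    (hKvol : volume K = 1)
    (hLconv : Convex ℝ L) (hLbd : IsBounded L) (hLint : (interior L).Nonempty)
    (ε : ℝ) (hε : 0 < ε) :
    Tendsto (fun n : ℕ =>
      unifPts K n {ω : Fin n → ℝ × ℝ |
        ∃ S : Set (ℝ × ℝ), IsHomothet L S ∧ S ⊆ K ∧ (∀ i, ω i ∉ interior S) ∧
          ENNReal.ofReal ((1 - ε) * Real.log n / n) ≤ volume S})
      atTop (nhds 1) :=
  exists_large_homothetic_hole_general K L hKint hKvol hLconv hLbd hLint ε hε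
end
end

section
/- Let k, n be positive natural numbers with k ≥ 2. Suppose n balls are thrown independently and uniformly at random into k bins, and let Y be the random variable counting the number of bins that receive no ball. Then the variance of Y equals k·(1 − 1/k)^n + k·(k−1)·(1 − 2/k)^n − k²·(1 − 1/k)^{2n}. -/
/-!
Write `Y = ∑ⱼ 1[bin j is empty]`, so that `Y² = ∑ⱼ ∑ⱼ' 1[bins j and j' are empty]`. By
independence of the balls, a given set of `m` bins stays empty with probability `(1 - m/k)ⁿ`.
Hence `E[Y] = k (1 - 1/k)ⁿ`, while the `k` diagonal and `k (k-1)` off-diagonal terms give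
`E[Y²] = k (1 - 1/k)ⁿ + k (k-1) (1 - 2/k)ⁿ`.
-/

open MeasureTheory ProbabilityTheory

noncomputable section

/-- The number of empty bins: the number of bins in `Fin k` not hit by any of the `n`
balls `ω 0, …, ω (n-1)`. -/
def emptyBins {n k : ℕ} (ω : Fin n → Fin k) : ℕ :=
  (Finset.univ.filter fun j : Fin k => ∀ i, ω i ≠ j).card

open Finset

section Avoids
variable {ι α : Type*}

def avoids (s : Finset α) : Set (ι → α) := {ω | ∀ i, ω i ∉ s}

theorem avoids_inter_avoids [DecidableEq α] (s t : Finset α) :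
    (avoids s ∩ avoids t : Set (ι → α)) = avoids (s ∪ t) := by
  ext ω; simp [avoids, forall_and]

theorem measureReal_pi_uniformOn_avoids [Fintype ι] [Fintype α] [Nonempty α] [MeasurableSpace α]
    [MeasurableSingletonClass α] (s : Finset α) :
    (Measure.pi fun _ : ι => uniformOn (Set.univ : Set α)).real (avoids s)
      = (1 - (#s : ℝ) / Fintype.card α) ^ Fintype.card ι := by
  classical
  have hset : avoids s = Set.univ.pi fun _ : ι => ((sᶜ : Finset α) : Set α) := by
    ext ω; simp [avoids]
  have hcard : ((#sᶜ : ℕ) : ℝ) = Fintype.card α - #s := by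
    rw [card_compl, Nat.cast_sub (card_le_univ s)]
  rw [measureReal_def, hset, Measure.pi_pi, prod_const, card_univ, ENNReal.toReal_pow,
    uniformOn_univ, Measure.count_apply_finset, ENNReal.toReal_div]
  simp only [ENNReal.toReal_natCast, hcard]
  rw [sub_div, div_self (by positivity)]

end Avoids

theorem integral_sum_indicator_one {Ω κ : Type*} [MeasurableSpace Ω] [Finite Ω]
    [MeasurableSingletonClass Ω] (μ : Measure Ω) [IsFiniteMeasure μ] (s : Finset κ)
    (A : κ → Set Ω) :
    ∫ ω, ∑ j ∈ s, (A j).indicator (1 : Ω → ℝ) ω ∂μ = ∑ j ∈ s, μ.real (A j) := by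
  rw [integral_finsetSum _ fun _ _ => Integrable.of_finite]
  exact sum_congr rfl fun j _ => integral_indicator_one (Set.toFinite _).measurableSet

theorem sum_apply_card_pair {α : Type*} [Fintype α] [DecidableEq α] (a : α) (f : ℕ → ℝ) :
    ∑ b : α, f #{a, b} = f 1 + (Fintype.card α - 1) * f 2 := by
  rw [Fintype.sum_eq_add_sum_compl a, pair_eq_singleton, card_singleton]
  have hpair : ∀ b ∈ ({a}ᶜ : Finset α), f #{a, b} = f 2 := fun b hb ↦ by
    rw [card_pair (by simpa [eq_comm] using hb)]
  rw [sum_congr rfl hpair, sum_const, card_compl, card_singleton, nsmul_eq_mul,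
    Nat.cast_sub (Fintype.card_pos_iff.2 ⟨a⟩), Nat.cast_one]

section Bins
variable {n k : ℕ}

local notation "μ" => Measure.pi fun _ : Fin n => uniformOn (Set.univ : Set (Fin k))

theorem emptyBins_eq_sum_indicator (ω : Fin n → Fin k) :
    (emptyBins ω : ℝ) = ∑ j, (avoids {j}).indicator 1 ω := by
  rw [emptyBins, card_filter]
  push_cast
  simp [avoids, Set.indicator_apply]

theorem emptyBins_sq_eq_sum_indicator (ω : Fin n → Fin k) :
    (emptyBins ω : ℝ) ^ 2 = ∑ j, ∑ j', (avoids {j, j'}).indicator 1 ω := by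
  simp_rw [sq, emptyBins_eq_sum_indicator, sum_mul_sum, ← Pi.mul_apply (f := Set.indicator _ 1),
    ← Set.inter_indicator_one, avoids_inter_avoids, ← insert_eq]

theorem integral_emptyBins [NeZero k] :
    ∫ ω, (emptyBins ω : ℝ) ∂μ = k * (1 - 1 / (k : ℝ)) ^ n := by
  simp_rw [emptyBins_eq_sum_indicator]
  rw [integral_sum_indicator_one]
  simp [measureReal_pi_uniformOn_avoids]

theorem integral_emptyBins_sq [NeZero k] :
    ∫ ω, (emptyBins ω : ℝ) ^ 2 ∂μ
      = k * (1 - 1 / (k : ℝ)) ^ n + k * (k - 1) * (1 - 2 / (k : ℝ)) ^ n := by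
  simp_rw [emptyBins_sq_eq_sum_indicator]
  rw [integral_finsetSum _ fun _ _ => Integrable.of_finite]
  simp_rw [integral_sum_indicator_one, measureReal_pi_uniformOn_avoids, Fintype.card_fin,
    sum_apply_card_pair (f := fun c => (1 - (c : ℝ) / k) ^ n), Fintype.card_fin]
  simp [mul_assoc]

end Bins

theorem variance_emptyBins_general (k n : ℕ) (hk : 2 ≤ k) :
    (∫ ω : Fin n → Fin k, ((emptyBins ω : ℝ)) ^ 2
        ∂(Measure.pi fun _ : Fin n => uniformOn (Set.univ : Set (Fin k)))) -
      (∫ ω : Fin n → Fin k, (emptyBins ω : ℝ)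
        ∂(Measure.pi fun _ : Fin n => uniformOn (Set.univ : Set (Fin k)))) ^ 2
      = (k : ℝ) * (1 - 1 / (k : ℝ)) ^ n
        + (k : ℝ) * ((k : ℝ) - 1) * (1 - 2 / (k : ℝ)) ^ n
        - (k : ℝ) ^ 2 * (1 - 1 / (k : ℝ)) ^ (2 * n) := by
  have : NeZero k := ⟨by omega⟩
  rw [integral_emptyBins_sq, integral_emptyBins]
  ring

/-- **Proposition 2.1 (variance).** If `n` balls are thrown independently and uniformly
at random into `k ≥ 2` bins, and `Y` counts the empty bins, then
`Var[Y] = k (1 - 1/k)^n + k (k-1) (1 - 2/k)^n - k² (1 - 1/k)^{2n}`. -/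
theorem variance_emptyBins (k n : ℕ) (hk : 2 ≤ k) (hn : 0 < n) :
    (∫ ω : Fin n → Fin k, ((emptyBins ω : ℝ)) ^ 2
        ∂(Measure.pi fun _ : Fin n => uniformOn (Set.univ : Set (Fin k)))) -
      (∫ ω : Fin n → Fin k, (emptyBins ω : ℝ)
        ∂(Measure.pi fun _ : Fin n => uniformOn (Set.univ : Set (Fin k)))) ^ 2
      = (k : ℝ) * (1 - 1 / (k : ℝ)) ^ n
        + (k : ℝ) * ((k : ℝ) - 1) * (1 - 2 / (k : ℝ)) ^ n
        - (k : ℝ) ^ 2 * (1 - 1 / (k : ℝ)) ^ (2 * n) :=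
  variance_emptyBins_general k n hk
end
end

section
/- Let K be a bounded convex set in the plane with area 1 and diameter ρ, let ε > 0 be sufficiently small, let n be sufficiently large, and set θ₀ := ε(2+4ε)·log n/(4ρ²n). Then every rectangle of area (2+4ε)·log n / n contained in K contains a rectangle of area at least (2+2ε)·log n / n whose inclination equals t·θ₀ for some integer t with 0 ≤ t < π/θ₀. -/
open MeasureTheory Set Bornology

noncomputable section

/-- A rectangle with inclination `θ`: the image under the rotation by `θ` followed by a
translation of an axis-parallel rectangle `[0,w] × [0,h]` with width `w ≤ h`.  (The
minor axis of `[0,w] × [0,h]` — the line through the midpoints of its two long vertical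
sides — is parallel to the `x`-axis, i.e. this base rectangle has inclination `0`; after
rotating by `θ` the minor axis makes angle `θ` with the `x`-axis.) -/
def IsRectangleWithInclination (θ : ℝ) (R : Set (ℝ × ℝ)) : Prop :=
  ∃ (c : ℝ × ℝ) (w h : ℝ), 0 < w ∧ w ≤ h ∧
    R = (fun p => c + rot θ p) '' (Icc 0 w ×ˢ Icc 0 h)

/-!
Every rectangle is `[0,w] × [0,h]` with `w ≤ h`, rotated by some `θ ∈ [0, π)` and translated:
rotating a box by `π` only translates it, and rotating by `π/2` swaps its sides. With
`t = ⌊θ/θ₀⌋` and `δ = θ - tθ₀ < θ₀`, the box of inclination `tθ₀` with sides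
`w - h sin δ ≤ h - w sin δ` fits inside, and its area is at least `wh - (w² + h²) sin δ`.
Since `ℝ × ℝ` carries the sup metric, the diameter `ρ` of `K` only bounds the diagonal by
`w² + h² ≤ 2ρ²`, so the loss is at most `2ρ²θ₀ = ε · wh / 2`, which leaves
`(1 - ε/2)(2 + 4ε) log n / n ≥ (2 + 2ε) log n / n` for `ε ≤ 1/2`, whatever `n`.
-/

section

open Real

lemma rot_add_pi (θ : ℝ) (p : ℝ × ℝ) : rot (θ + π) p = -rot θ p := by
  simp only [rot, cos_add_pi, sin_add_pi, Prod.neg_mk, Prod.mk.injEq]; constructor <;> ring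

lemma rot_add_pi_div_two (θ : ℝ) (p : ℝ × ℝ) : rot (θ + π / 2) p = rot θ (-p.2, p.1) := by
  simp only [rot, cos_add_pi_div_two, sin_add_pi_div_two, Prod.mk.injEq]; constructor <;> ring

lemma rot_add (θ : ℝ) (p q : ℝ × ℝ) : rot θ (p + q) = rot θ p + rot θ q := by
  simp only [rot, Prod.fst_add, Prod.snd_add, Prod.mk_add_mk, Prod.mk.injEq]; constructor <;> ring

lemma rot_sub (θ : ℝ) (p q : ℝ × ℝ) : rot θ (p - q) = rot θ p - rot θ q := by
  simp only [rot, Prod.fst_sub, Prod.snd_sub, Prod.mk_sub_mk, Prod.mk.injEq]; constructor <;> ring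

lemma rot_fst_sq_add_snd_sq (θ : ℝ) (p : ℝ × ℝ) :
    (rot θ p).1 ^ 2 + (rot θ p).2 ^ 2 = p.1 ^ 2 + p.2 ^ 2 := by
  simp only [rot]; linear_combination (p.1 ^ 2 + p.2 ^ 2) * sin_sq_add_cos_sq θ

def rotLinearMap (θ : ℝ) : (ℝ × ℝ) →ₗ[ℝ] ℝ × ℝ where
  toFun := rot θ
  map_add' := rot_add θ
  map_smul' r p := by
    simp only [rot, Prod.smul_fst, Prod.smul_snd, smul_eq_mul, RingHom.id_apply, Prod.smul_mk]
    congr 1 <;> ring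

lemma det_rotLinearMap (θ : ℝ) : LinearMap.det (rotLinearMap θ) = 1 := by
  rw [← LinearMap.det_toMatrix (Module.Basis.finTwoProd ℝ), Matrix.det_fin_two]
  simp [LinearMap.toMatrix_apply, rotLinearMap, rot, Module.Basis.finTwoProd]
  linear_combination sin_sq_add_cos_sq θ

def placedBox (θ : ℝ) (c : ℝ × ℝ) (a b : ℝ) : Set (ℝ × ℝ) :=
  (fun p => c + rot θ p) '' (Icc 0 a ×ˢ Icc 0 b)

open Pointwise in
lemma volume_placedBox (θ : ℝ) (c : ℝ × ℝ) {a : ℝ} (ha : 0 ≤ a) (b : ℝ) :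
    volume (placedBox θ c a b) = ENNReal.ofReal (a * b) := by
  have : placedBox θ c a b = c +ᵥ (rotLinearMap θ '' (Icc 0 a ×ˢ Icc 0 b)) := by
    rw [← image_vadd, ← image_comp]; rfl
  rw [this, measure_vadd, Measure.addHaar_image_linearMap, det_rotLinearMap, abs_one,
    ENNReal.ofReal_one, one_mul, Measure.volume_eq_prod, Measure.prod_prod, Real.volume_Icc,
    Real.volume_Icc, sub_zero, sub_zero, ← ENNReal.ofReal_mul ha]

lemma placedBox_add_pi (θ : ℝ) (c : ℝ × ℝ) (a b : ℝ) :
    placedBox (θ + π) c a b = placedBox θ (c - rot θ (a, b)) a b := by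
  have hbox : (fun p => (a, b) - p) '' (Icc 0 a ×ˢ Icc 0 b) = Icc 0 a ×ˢ Icc 0 b := by
    rw [Icc_prod_Icc, ← Prod.zero_eq_mk, image_const_sub_Icc, sub_self, sub_zero]
  conv_lhs => rw [placedBox, ← hbox, image_image]
  congr 1; funext p
  rw [rot_add_pi, rot_sub]
  abel

lemma placedBox_swap (θ : ℝ) (c : ℝ × ℝ) (a b : ℝ) :
    placedBox θ c a b = placedBox (θ + π / 2) (c + rot θ (a, 0)) b a := by
  have hbox : (fun q : ℝ × ℝ => (a - q.2, q.1)) '' (Icc 0 b ×ˢ Icc 0 a) = Icc 0 a ×ˢ Icc 0 b := by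
    ext ⟨x, y⟩
    simp only [mem_image, mem_prod, mem_Icc, Prod.exists, Prod.mk.injEq]
    constructor
    · rintro ⟨u, v, ⟨⟨hu, hub⟩, hv, hva⟩, rfl, rfl⟩
      exact ⟨⟨by linarith, by linarith⟩, hu, hub⟩
    · rintro ⟨⟨hx, hxa⟩, hy, hyb⟩
      exact ⟨y, a - x, ⟨⟨hy, hyb⟩, by linarith, by linarith⟩, by ring, rfl⟩
  rw [placedBox, placedBox, ← hbox, image_image]
  congr 1; funext q
  rw [rot_add_pi_div_two, add_assoc, ← rot_add]
  congr 2
  ext <;> simp [sub_eq_add_neg]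

lemma periodic_range_placedBox (a b : ℝ) :
    Function.Periodic (fun θ => range fun c => placedBox θ c a b) π := by
  intro θ
  ext R
  constructor
  · rintro ⟨c, rfl⟩
    exact ⟨_, (placedBox_add_pi θ c a b).symm⟩
  · rintro ⟨c, rfl⟩
    exact ⟨c + rot θ (a, b), by simp only [placedBox_add_pi, add_sub_cancel_right]⟩

lemma exists_placedBox_eq_of_mem_Ico (θ : ℝ) (c : ℝ × ℝ) (a b : ℝ) :
    ∃ θ' ∈ Ico 0 π, ∃ c', placedBox θ c a b = placedBox θ' c' a b := by
  obtain ⟨θ', hθ', hrange⟩ := (periodic_range_placedBox a b).exists_mem_Ico₀ pi_pos θ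
  obtain ⟨c', hc'⟩ : placedBox θ c a b ∈ range fun c => placedBox θ' c a b :=
    hrange ▸ mem_range_self c
  exact ⟨θ', hθ', c', hc'.symm⟩

lemma IsRectangle.exists_eq_placedBox {R : Set (ℝ × ℝ)} (hR : IsRectangle R) :
    ∃ θ ∈ Ico 0 π, ∃ c w h, 0 < w ∧ w ≤ h ∧ R = placedBox θ c w h := by
  obtain ⟨θ, c, a, b, ha, hb, rfl⟩ := hR
  rcases le_total a b with hab | hba
  · obtain ⟨θ', hθ', c', h⟩ := exists_placedBox_eq_of_mem_Ico θ c a b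
    exact ⟨θ', hθ', c', a, b, ha, hab, h⟩
  · obtain ⟨θ', hθ', c', h⟩ := exists_placedBox_eq_of_mem_Ico (θ + π / 2) (c + rot θ (a, 0)) b a
    exact ⟨θ', hθ', c', b, a, hb, hba, (placedBox_swap θ c a b).trans h⟩

lemma sq_add_sq_le_of_placedBox_subset {K : Set (ℝ × ℝ)} (hK : IsBounded K) {θ w h : ℝ}
    {c : ℝ × ℝ} (hw : 0 ≤ w) (hh : 0 ≤ h) (hKR : placedBox θ c w h ⊆ K) :
    w ^ 2 + h ^ 2 ≤ 2 * Metric.diam K ^ 2 := by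
  have hc : c ∈ placedBox θ c w h := ⟨(0, 0), ⟨⟨le_rfl, hw⟩, le_rfl, hh⟩, by simp [rot]⟩
  have hc' : c + rot θ (w, h) ∈ placedBox θ c w h := ⟨(w, h), ⟨⟨hw, le_rfl⟩, hh, le_rfl⟩, rfl⟩
  have hnorm : ‖rot θ (w, h)‖ ≤ Metric.diam K := by
    rw [← dist_self_add_left (rot θ (w, h)) c]
    exact Metric.dist_le_diam_of_mem hK (hKR hc') (hKR hc)
  have hfst : (rot θ (w, h)).1 ^ 2 ≤ Metric.diam K ^ 2 := by
    rw [← sq_abs, ← Real.norm_eq_abs]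
    exact pow_le_pow_left₀ (norm_nonneg _) ((norm_fst_le _).trans hnorm) 2
  have hsnd : (rot θ (w, h)).2 ^ 2 ≤ Metric.diam K ^ 2 := by
    rw [← sq_abs, ← Real.norm_eq_abs]
    exact pow_le_pow_left₀ (norm_nonneg _) ((norm_snd_le _).trans hnorm) 2
  linarith [rot_fst_sq_add_snd_sq θ (w, h)]

/-- The box tilted by `δ` has a corner on each side of the original box. -/
lemma placedBox_sub_subset_placedBox {θ δ w h : ℝ} (c : ℝ × ℝ) (hδ : δ ∈ Icc 0 (π / 2))
    (hw : 0 ≤ w) (hh : w * sin δ ≤ h) :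
    placedBox (θ - δ) (c + rot θ (0, (w - h * sin δ) * sin δ)) (w - h * sin δ)
      (h - w * sin δ) ⊆ placedBox θ c w h := by
  have hs0 : 0 ≤ sin δ := sin_nonneg_of_nonneg_of_le_pi hδ.1 (by linarith [hδ.2, pi_pos])
  have hc0 : 0 ≤ cos δ := cos_nonneg_of_mem_Icc ⟨by linarith [hδ.1, pi_pos], hδ.2⟩
  have hs1 := sin_le_one δ
  have hc1 := cos_le_one δ
  have hh0 : 0 ≤ h := (mul_nonneg hw hs0).trans hh
  rintro _ ⟨p, ⟨⟨hx0, hx1⟩, hy0, hy1⟩, rfl⟩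
  -- in the frame of the original box, `p` sits at `(0, (w - h sin δ) sin δ) + rot (-δ) p`
  refine ⟨(p.1 * cos δ + p.2 * sin δ, (w - h * sin δ) * sin δ - p.1 * sin δ + p.2 * cos δ),
    ⟨⟨by positivity, ?_⟩, ?_, ?_⟩, ?_⟩
  · nlinarith [mul_nonneg hx0 (sub_nonneg.2 hc1), mul_nonneg hy0 hs0, mul_nonneg hw hs0,
      mul_le_mul_of_nonneg_right hy1 hs0]
  · nlinarith [mul_nonneg (sub_nonneg.2 hx1) hs0, mul_nonneg hy0 hc0]
  · nlinarith [mul_nonneg hy0 (sub_nonneg.2 hc1), mul_nonneg hx0 hs0,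
      mul_nonneg (mul_nonneg hh0 hs0) hs0, mul_le_mul_of_nonneg_right hy1 hc0]
  · simp only [rot, cos_sub, sin_sub, Prod.ext_iff, Prod.fst_add, Prod.snd_add]
    constructor <;> ring

lemma exists_nat_mul_le_lt_add {θ θ₀ : ℝ} (hθ : 0 ≤ θ) (hθ₀ : 0 < θ₀) :
    ∃ t : ℕ, t * θ₀ ≤ θ ∧ θ < t * θ₀ + θ₀ := by
  refine ⟨⌊θ / θ₀⌋₊, ?_, ?_⟩
  · exact (le_div_iff₀ hθ₀).1 (Nat.floor_le (div_nonneg hθ hθ₀.le))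
  · rw [← add_one_mul]
    exact (div_lt_iff₀ hθ₀).1 (Nat.lt_floor_add_one _)

lemma exists_subset_placedBox_inclination_nat_mul {θ θ₀ w h : ℝ} (c : ℝ × ℝ) (hθ : 0 ≤ θ)
    (hθ₀ : 0 < θ₀) (hw : 0 < w) (hwh : w ≤ h) (hsmall : (w ^ 2 + h ^ 2) * θ₀ < w * h) :
    ∃ t : ℕ, t * θ₀ ≤ θ ∧ ∃ R, IsRectangleWithInclination (t * θ₀) R ∧
      R ⊆ placedBox θ c w h ∧ ENNReal.ofReal (w * h - (w ^ 2 + h ^ 2) * θ₀) ≤ volume R := by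
  obtain ⟨t, htθ, hθt⟩ := exists_nat_mul_le_lt_add hθ hθ₀
  set δ := θ - t * θ₀
  have hθ₀_le : θ₀ ≤ 1 := by nlinarith [sq_nonneg (h - w)]
  have hδ_mem : δ ∈ Icc 0 (π / 2) := ⟨by linarith, by linarith [pi_gt_three]⟩
  set s := sin δ
  have hs0 : 0 ≤ s := sin_nonneg_of_nonneg_of_le_pi hδ_mem.1 (by linarith [hδ_mem.2, pi_pos])
  have hsθ₀ : s ≤ θ₀ := (sin_le hδ_mem.1).trans (by linarith)
  have hw' : 0 < w - h * s := by nlinarith [mul_le_mul_of_nonneg_left hsθ₀ (sq_nonneg h)]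
  have hwh' : w - h * s ≤ h - w * s := by nlinarith
  refine ⟨t, htθ, placedBox (t * θ₀) (c + rot θ (0, (w - h * s) * s)) (w - h * s) (h - w * s),
    ⟨_, _, _, hw', hwh', rfl⟩, ?_, ?_⟩
  · rw [show (t : ℝ) * θ₀ = θ - δ by ring]
    exact placedBox_sub_subset_placedBox c hδ_mem hw.le (by nlinarith)
  · rw [volume_placedBox _ _ hw'.le]
    refine ENNReal.ofReal_le_ofReal ?_
    nlinarith [mul_le_mul_of_nonneg_left hsθ₀ (add_nonneg (sq_nonneg w) (sq_nonneg h)),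
      mul_nonneg (mul_nonneg hw.le (hw.le.trans hwh)) (sq_nonneg s)]

end

theorem rectangle_rounded_inclination_general (K : Set (ℝ × ℝ))
    (hKbd : IsBounded K) :
    ∃ ε₀ : ℝ, 0 < ε₀ ∧ ∀ ε : ℝ, 0 < ε → ε < ε₀ →
      ∃ N : ℕ, ∀ n : ℕ, N ≤ n →
        ∀ R : Set (ℝ × ℝ), IsRectangle R → R ⊆ K →
          volume R = ENNReal.ofReal ((2 + 4 * ε) * Real.log n / n) →
          ∃ (R' : Set (ℝ × ℝ)) (t : ℕ),
            (t : ℝ) < Real.pi /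
              (ε * (2 + 4 * ε) * Real.log n / (4 * Metric.diam K ^ 2 * n)) ∧
            IsRectangleWithInclination
              ((t : ℝ) * (ε * (2 + 4 * ε) * Real.log n / (4 * Metric.diam K ^ 2 * n)))
              R' ∧
            R' ⊆ R ∧
            ENNReal.ofReal ((2 + 2 * ε) * Real.log n / n) ≤ volume R' := by
  refine ⟨1 / 2, one_half_pos, fun ε hε hε' => ⟨0, fun n _ R hR hRK hRvol => ?_⟩⟩
  obtain ⟨θ, hθ, c, w, h, hw, hwh, rfl⟩ := hR.exists_eq_placedBox
  have hh : 0 < h := hw.trans_le hwh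
  have hdiag := sq_add_sq_le_of_placedBox_subset hKbd hw.le hh.le hRK
  have hρ : 0 < Metric.diam K ^ 2 := by nlinarith
  set x := Real.log n / n
  have harea : w * h = (2 + 4 * ε) * x := by
    rw [volume_placedBox _ _ hw.le] at hRvol
    have hpos : 0 < (2 + 4 * ε) * Real.log n / n :=
      ENNReal.ofReal_pos.1 (hRvol ▸ ENNReal.ofReal_pos.2 (mul_pos hw hh))
    rw [← mul_div_assoc, ← ENNReal.ofReal_eq_ofReal_iff (mul_pos hw hh).le hpos.le, hRvol]
  have hx : 0 < x := by nlinarith [mul_pos hw hh]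
  set θ₀ := ε * (2 + 4 * ε) * Real.log n / (4 * Metric.diam K ^ 2 * n)
  have hθ₀ : θ₀ = ε * (w * h) / (4 * Metric.diam K ^ 2) := by rw [harea]; ring
  have hθ₀_pos : 0 < θ₀ := by rw [hθ₀]; positivity
  have hloss : (w ^ 2 + h ^ 2) * θ₀ ≤ ε / 2 * (w * h) := by
    calc (w ^ 2 + h ^ 2) * θ₀ ≤ 2 * Metric.diam K ^ 2 * θ₀ := by gcongr
      _ = ε / 2 * (w * h) := by rw [hθ₀, mul_div_assoc', div_eq_iff (by positivity)]; ring
  obtain ⟨t, ht, R', hR', hR'R, hvol⟩ := exists_subset_placedBox_inclination_nat_mul c hθ.1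
    hθ₀_pos hw hwh (by nlinarith [mul_pos hw hh])
  refine ⟨R', t, (lt_div_iff₀ hθ₀_pos).2 (ht.trans_lt hθ.2), hR', hR'R,
    le_trans (ENNReal.ofReal_le_ofReal ?_) hvol⟩
  rw [mul_div_assoc]
  nlinarith [mul_nonneg (mul_nonneg hε.le (by linarith : 0 ≤ 1 - 2 * ε)) hx.le]

/-- **Claim A.** Let `K` be a bounded convex set of area 1 and diameter `ρ`, let `ε > 0`
be sufficiently small and `n` sufficiently large, and set
`θ₀ = ε(2+4ε) log n / (4ρ²n)`.  Every rectangle of area `(2+4ε) log n / n` contained in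
`K` contains a rectangle of area at least `(2+2ε) log n / n` whose inclination is `t θ₀`
for some integer `0 ≤ t < π/θ₀`. -/
theorem rectangle_rounded_inclination (K : Set (ℝ × ℝ))
    (hKconv : Convex ℝ K) (hKbd : IsBounded K) (hKvol : volume K = 1) :
    ∃ ε₀ : ℝ, 0 < ε₀ ∧ ∀ ε : ℝ, 0 < ε → ε < ε₀ →
      ∃ N : ℕ, ∀ n : ℕ, N ≤ n →
        ∀ R : Set (ℝ × ℝ), IsRectangle R → R ⊆ K →
          volume R = ENNReal.ofReal ((2 + 4 * ε) * Real.log n / n) →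
          ∃ (R' : Set (ℝ × ℝ)) (t : ℕ),
            (t : ℝ) < Real.pi /
              (ε * (2 + 4 * ε) * Real.log n / (4 * Metric.diam K ^ 2 * n)) ∧
            IsRectangleWithInclination
              ((t : ℝ) * (ε * (2 + 4 * ε) * Real.log n / (4 * Metric.diam K ^ 2 * n)))
              R' ∧
            R' ⊆ R ∧
            ENNReal.ofReal ((2 + 2 * ε) * Real.log n / n) ≤ volume R' :=
  rectangle_rounded_inclination_general K hKbd
end
end
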